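/- For |q|<1, |ζ|<1, ζ ≠ 1: Σ_{n≥0} ζ^n/(−q;q²)_n = 1 + (ζ/(1−ζ)) Σ_{n≥0} (−q)^n/(ζq²;q²)_n, i.e., F(0, −q^{-1}; ζ; q²) = 1 + ζ/(1−ζ) · F(0, ζ; −q; q²) where F(0,b;t;Q) = Σ_{n≥0} t^n/(bQ;Q)_n. -/

import Mathlib

open Complex

/-- The q-Pochhammer symbol `(a;q)_n = ∏_{j=0}^{n-1} (1 - a q^j)`. -/
noncomputable def qPoch (a q : ℂ) (n : ℕ) : ℂ := ∏ j ∈ Finset.range n, (1 - a * q ^ j)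

/-!
By the q-binomial theorem, `1/(y;Q)_{n+1} = ∑ₖ [n+k, k]_Q yᵏ`. The Gaussian binomial
coefficients `[n+k, k]_Q` are symmetric in `n` and `k` and, for `‖Q‖ < 1`, uniformly bounded, so
the double series `∑ uⁿ [n+k, k]_Q yᵏ` converges absolutely; summing it in the two orders gives
Fine's symmetric identity `∑ₙ uⁿ/(y;Q)_{n+1} = ∑ₖ yᵏ/(u;Q)_{k+1}`. For `Q = q²`, `y = -q`,
`u = ζ`, splitting off the term `n = 0` on the left and the factor `1 - ζ` of `(ζ;Q)_{k+1}` on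
the right gives the theorem.
-/

open Finset

@[simp]
lemma qPoch_zero (a q : ℂ) : qPoch a q 0 = 1 := prod_range_zero _

lemma qPoch_succ (a q : ℂ) (n : ℕ) : qPoch a q (n + 1) = qPoch a q n * (1 - a * q ^ n) :=
  prod_range_succ _ _

lemma qPoch_succ' (a q : ℂ) (n : ℕ) : qPoch a q (n + 1) = (1 - a) * qPoch (a * q) q n := by
  simp only [qPoch, prod_range_succ', pow_zero, mul_one, pow_succ', mul_assoc, mul_comm (1 - a)]

lemma qPoch_ne_zero {a q : ℂ} (ha : ‖a‖ < 1) (hq : ‖q‖ ≤ 1) (n : ℕ) : qPoch a q n ≠ 0 := by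
  refine prod_ne_zero_iff.2 fun j _ h => ?_
  have hlt : ‖a * q ^ j‖ < 1 := by
    rw [norm_mul, norm_pow]
    exact mul_lt_one_of_nonneg_of_lt_one_left (norm_nonneg a) ha (pow_le_one₀ (norm_nonneg q) hq)
  rw [← sub_eq_zero.1 h, norm_one] at hlt
  exact lt_irrefl _ hlt

lemma sum_range_pow_le_one_div {r : ℝ} (hr0 : 0 ≤ r) (hr1 : r < 1) (n : ℕ) :
    ∑ j ∈ range n, r ^ j ≤ 1 / (1 - r) := by
  have h := geom_sum_Ico_le_of_lt_one (m := 0) (n := n) hr0 hr1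
  rwa [← range_eq_Ico, pow_zero] at h

lemma exp_neg_div_le_one_sub {x s : ℝ} (hx : 0 ≤ x) (hxs : x ≤ s) (hs : s < 1) :
    Real.exp (-(x / (1 - s))) ≤ 1 - x := by
  have hexp := Real.add_one_le_exp (x / (1 - s))
  have h1s : 0 < 1 - s := by linarith
  have hkey : 1 ≤ (1 - x) * (x / (1 - s) + 1) := by
    rw [div_add_one h1s.ne', mul_div_assoc', le_div_iff₀ h1s]
    nlinarith
  rw [Real.exp_neg, inv_le_iff_one_le_mul₀ (Real.exp_pos _)]
  exact hkey.trans (mul_le_mul_of_nonneg_left hexp (by linarith))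

lemma norm_qPoch_le (a : ℂ) {Q : ℂ} (hQ : ‖Q‖ < 1) (n : ℕ) :
    ‖qPoch a Q n‖ ≤ Real.exp (‖a‖ / (1 - ‖Q‖)) := by
  calc ‖qPoch a Q n‖ = ∏ j ∈ range n, ‖1 - a * Q ^ j‖ := norm_prod _ _
    _ ≤ ∏ j ∈ range n, Real.exp (‖a‖ * ‖Q‖ ^ j) := by
        gcongr with j
        calc ‖1 - a * Q ^ j‖ ≤ ‖(1 : ℂ)‖ + ‖a * Q ^ j‖ := norm_sub_le _ _
          _ = ‖a‖ * ‖Q‖ ^ j + 1 := by simp [add_comm]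
          _ ≤ _ := Real.add_one_le_exp _
    _ = Real.exp (‖a‖ * ∑ j ∈ range n, ‖Q‖ ^ j) := by rw [← Real.exp_sum, mul_sum]
    _ ≤ Real.exp (‖a‖ / (1 - ‖Q‖)) := by
        rw [div_eq_mul_one_div]
        gcongr
        exact sum_range_pow_le_one_div (norm_nonneg Q) hQ n

lemma exp_neg_le_norm_qPoch {a Q : ℂ} (ha : ‖a‖ < 1) (hQ : ‖Q‖ < 1) (n : ℕ) :
    Real.exp (-(‖a‖ / ((1 - ‖a‖) * (1 - ‖Q‖)))) ≤ ‖qPoch a Q n‖ := by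
  have h1a : 0 < 1 - ‖a‖ := by linarith
  calc Real.exp (-(‖a‖ / ((1 - ‖a‖) * (1 - ‖Q‖))))
      ≤ Real.exp (-(‖a‖ / (1 - ‖a‖) * ∑ j ∈ range n, ‖Q‖ ^ j)) := by
        rw [div_mul_eq_div_div, div_eq_mul_one_div (‖a‖ / (1 - ‖a‖))]
        gcongr
        exact sum_range_pow_le_one_div (norm_nonneg Q) hQ n
    _ = ∏ j ∈ range n, Real.exp (-(‖a‖ * ‖Q‖ ^ j / (1 - ‖a‖))) := by
        rw [← Real.exp_sum, sum_neg_distrib, mul_sum]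
        congr 2
        exact sum_congr rfl fun j _ => by ring
    _ ≤ ∏ j ∈ range n, ‖1 - a * Q ^ j‖ := by
        gcongr with j
        have hpow : ‖Q‖ ^ j ≤ 1 := pow_le_one₀ (norm_nonneg Q) hQ.le
        calc _ ≤ 1 - ‖a‖ * ‖Q‖ ^ j :=
              exp_neg_div_le_one_sub (by positivity)
                (mul_le_of_le_one_right (norm_nonneg a) hpow) ha
          _ = ‖(1 : ℂ)‖ - ‖a * Q ^ j‖ := by simp
          _ ≤ _ := norm_sub_norm_le _ _
    _ = ‖qPoch a Q n‖ := (norm_prod _ _).symm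

/-- The Gaussian binomial coefficient `[n+k, k]_Q`, indexed by the two parts of `n + k` so that
its symmetry is visible. -/
noncomputable def gaussBinom (Q : ℂ) (n k : ℕ) : ℂ :=
  qPoch Q Q (n + k) / (qPoch Q Q n * qPoch Q Q k)

lemma gaussBinom_comm (Q : ℂ) (n k : ℕ) : gaussBinom Q n k = gaussBinom Q k n := by
  rw [gaussBinom, gaussBinom, add_comm, mul_comm (qPoch Q Q n)]

section

variable {Q y : ℂ}

lemma gaussBinom_zero_left (hQ : ‖Q‖ < 1) (k : ℕ) : gaussBinom Q 0 k = 1 := by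
  rw [gaussBinom, zero_add, qPoch_zero, one_mul, div_self (qPoch_ne_zero hQ hQ.le k)]

lemma gaussBinom_zero_right (hQ : ‖Q‖ < 1) (n : ℕ) : gaussBinom Q n 0 = 1 := by
  rw [gaussBinom_comm, gaussBinom_zero_left hQ]

lemma gaussBinom_succ_succ (hQ : ‖Q‖ < 1) (n k : ℕ) :
    gaussBinom Q (n + 1) (k + 1) =
      gaussBinom Q n (k + 1) + Q ^ (n + 1) * gaussBinom Q (n + 1) k := by
  have hP := qPoch_ne_zero hQ hQ.le
  have hn : 1 - Q * Q ^ n ≠ 0 := right_ne_zero_of_mul (qPoch_succ Q Q n ▸ hP (n + 1))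
  have hk : 1 - Q * Q ^ k ≠ 0 := right_ne_zero_of_mul (qPoch_succ Q Q k ▸ hP (k + 1))
  have hnk : n + 1 + (k + 1) = n + k + 1 + 1 := by ring
  simp only [gaussBinom, hnk, ← add_assoc, add_right_comm n 1 k, qPoch_succ]
  field_simp
  ring

lemma exists_norm_gaussBinom_le (hQ : ‖Q‖ < 1) : ∃ C, ∀ n k, ‖gaussBinom Q n k‖ ≤ C := by
  set c := Real.exp (-(‖Q‖ / ((1 - ‖Q‖) * (1 - ‖Q‖))))
  refine ⟨Real.exp (‖Q‖ / (1 - ‖Q‖)) / (c * c), fun n k => ?_⟩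
  rw [gaussBinom, norm_div, norm_mul]
  gcongr
  · exact norm_qPoch_le Q hQ _
  · exact exp_neg_le_norm_qPoch hQ hQ n
  · exact exp_neg_le_norm_qPoch hQ hQ k

lemma summable_gaussBinom_mul_pow (hQ : ‖Q‖ < 1) (hy : ‖y‖ < 1) (n : ℕ) :
    Summable fun k => gaussBinom Q n k * y ^ k := by
  obtain ⟨C, hC⟩ := exists_norm_gaussBinom_le hQ
  refine .of_norm_bounded ((summable_geometric_of_lt_one (norm_nonneg y) hy).mul_left C) fun k => ?_
  rw [norm_mul, norm_pow]
  gcongr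
  exact hC n k

theorem hasSum_gaussBinom_mul_pow (hQ : ‖Q‖ < 1) (hy : ‖y‖ < 1) (n : ℕ) :
    HasSum (fun k => gaussBinom Q n k * y ^ k) (qPoch y Q (n + 1))⁻¹ := by
  induction n with
  | zero => simpa [gaussBinom_zero_left hQ, qPoch_succ] using hasSum_geometric_of_norm_lt_one hy
  | succ n ih =>
    obtain ⟨S, hS⟩ := summable_gaussBinom_mul_pow hQ hy (n + 1)
    have hshift : HasSum (fun k => gaussBinom Q (n + 1) (k + 1) * y ^ (k + 1)) (S - 1) := by
      rw [← hasSum_nat_add_iff' 1] at hS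
      simpa [gaussBinom_zero_right hQ] using hS
    have hpascal : HasSum (fun k => gaussBinom Q (n + 1) (k + 1) * y ^ (k + 1))
        ((qPoch y Q (n + 1))⁻¹ - 1 + y * Q ^ (n + 1) * S) := by
      have ih' : HasSum (fun k => gaussBinom Q n (k + 1) * y ^ (k + 1))
          ((qPoch y Q (n + 1))⁻¹ - 1) := by
        rw [← hasSum_nat_add_iff' 1] at ih
        simpa [gaussBinom_zero_right hQ] using ih
      convert ih'.add (hS.mul_left (y * Q ^ (n + 1))) using 2 with k
      rw [gaussBinom_succ_succ hQ]
      ring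
    have hP : qPoch y Q (n + 1 + 1) ≠ 0 := qPoch_ne_zero hy hQ.le _
    rw [qPoch_succ] at hP ⊢
    have hS_eq := hshift.unique hpascal
    have hS_inv : S = (qPoch y Q (n + 1) * (1 - y * Q ^ (n + 1)))⁻¹ := by
      refine eq_inv_of_mul_eq_one_left ?_
      linear_combination qPoch y Q (n + 1) * hS_eq + mul_inv_cancel₀ (left_ne_zero_of_mul hP)
    exact hS_inv ▸ hS

end

theorem hasSum_pow_div_qPoch_succ {Q u y : ℂ} (hQ : ‖Q‖ < 1) (hu : ‖u‖ < 1) (hy : ‖y‖ < 1) :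
    HasSum (fun n => u ^ n / qPoch y Q (n + 1)) (∑' k, y ^ k / qPoch u Q (k + 1)) := by
  set F : ℕ × ℕ → ℂ := fun p => u ^ p.1 * gaussBinom Q p.1 p.2 * y ^ p.2
  have hF : Summable F := by
    obtain ⟨C, hC⟩ := exists_norm_gaussBinom_le hQ
    have hgeom := (summable_geometric_of_lt_one (norm_nonneg u) hu).mul_of_nonneg
      (summable_geometric_of_lt_one (norm_nonneg y) hy) (fun _ => by positivity)
      (fun _ => by positivity)
    refine .of_norm_bounded (hgeom.mul_left C) fun p => ?_
    calc ‖F p‖ = ‖u‖ ^ p.1 * ‖gaussBinom Q p.1 p.2‖ * ‖y‖ ^ p.2 := by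
          simp only [F, norm_mul, norm_pow]
      _ ≤ ‖u‖ ^ p.1 * C * ‖y‖ ^ p.2 := by gcongr; exact hC _ _
      _ = C * (‖u‖ ^ p.1 * ‖y‖ ^ p.2) := by ring
  have hrows : ∀ n, HasSum (fun k => F (n, k)) (u ^ n / qPoch y Q (n + 1)) := fun n => by
    simpa [F, mul_assoc, div_eq_mul_inv] using (hasSum_gaussBinom_mul_pow hQ hy n).mul_left (u ^ n)
  have hcols : ∀ k, HasSum (fun n => F (n, k)) (y ^ k / qPoch u Q (k + 1)) := fun k => by
    simpa [F, gaussBinom_comm Q _ k, mul_comm, mul_left_comm, div_eq_mul_inv] using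
      (hasSum_gaussBinom_mul_pow hQ hu k).mul_left (y ^ k)
  rw [(((Equiv.prodComm ℕ ℕ).hasSum_iff.2 hF.hasSum).prod_fiberwise hcols).tsum_eq]
  exact hF.hasSum.prod_fiberwise hrows

theorem fine_combined_general (q ζ : ℂ) (hq1 : ‖q‖ < 1)
    (hζ : ‖ζ‖ < 1) :
    ∑' n : ℕ, ζ ^ n / qPoch (-q) (q ^ 2) n
      = 1 + ζ / (1 - ζ) * ∑' n : ℕ, (-q) ^ n / qPoch (ζ * q ^ 2) (q ^ 2) n := by
  have hQ : ‖q ^ 2‖ < 1 := by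
    rw [norm_pow]
    exact pow_lt_one₀ (norm_nonneg q) hq1 two_ne_zero
  have hy : ‖-q‖ < 1 := by rwa [norm_neg]
  have hsum := (hasSum_pow_div_qPoch_succ hQ hζ hy).mul_left ζ
  have hLHS : HasSum (fun n => ζ ^ n / qPoch (-q) (q ^ 2) n)
      (ζ * ∑' k, (-q) ^ k / qPoch ζ (q ^ 2) (k + 1) + 1) := by
    rw [← hasSum_nat_add_iff' 1]
    simpa [pow_succ', mul_div_assoc] using hsum
  rw [hLHS.tsum_eq, add_comm, ← tsum_mul_left, ← tsum_mul_left]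
  congr 1
  refine tsum_congr fun k => ?_
  rw [qPoch_succ', div_mul_eq_div_div_swap]
  ring

/-- `F(0, −q^{-1}; ζ; q²) = 1 + ζ/(1−ζ) · F(0, ζ; −q; q²)`, i.e.
`Σ_{n≥0} ζ^n/(−q;q²)_n = 1 + (ζ/(1−ζ)) Σ_{n≥0} (−q)^n/(ζq²;q²)_n`. -/
theorem fine_combined (q ζ : ℂ) (hq0 : 0 < ‖q‖) (hq1 : ‖q‖ < 1)
    (hζ : ‖ζ‖ < 1) (hζ1 : ζ ≠ 1)
    (hζq : ∀ m : ℕ, 1 ≤ m → ζ * q ^ (2 * m) ≠ 1) :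
    ∑' n : ℕ, ζ ^ n / qPoch (-q) (q ^ 2) n
      = 1 + ζ / (1 - ζ) * ∑' n : ℕ, (-q) ^ n / qPoch (ζ * q ^ 2) (q ^ 2) n :=
  fine_combined_general q ζ hq1 hζ
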